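/- arXiv:1908.10393 — 5 statements merged into one kernel-verified Lean document; each statement's English description precedes it below -/
import Mathlib

section
/- Let ρ be a unital measuring, i.e. ρ satisfies conditions (1)–(4). Then for all l ∈ H^L, r ∈ H^R, k ∈ H and a ∈ A one has (lr)·(k·a) = (lrk)·a; that is, h·(k·a) = hk·a for every h in the subalgebra H^L H^R. -/
open scoped TensorProduct

/-- The data of a weak bialgebra structure (together with an antipode and its
inverse) on a `k`-algebra `H`: a comultiplication `Δ`, a counit `ε`, an
antipode `S` and its inverse `Sinv`. -/
structure WeakHopfData (k H : Type*) [Field k] [Ring H] [Algebra k H] where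
  Δ : H →ₗ[k] H ⊗[k] H
  ε : H →ₗ[k] k
  S : H →ₗ[k] H
  Sinv : H →ₗ[k] H

section

variable {k H A : Type*} [Field k] [Ring H] [Algebra k H] [Ring A] [Algebra k A]

/-- `Π^L(h) = ε(1⁽¹⁾h)1⁽²⁾`. -/
noncomputable def piL (W : WeakHopfData k H) (h : H) : H :=
  (TensorProduct.lid k H) ((LinearMap.rTensor H (W.ε ∘ₗ LinearMap.mulRight k h)) (W.Δ 1))

/-- `Π^R(h) = 1⁽¹⁾ε(h1⁽²⁾)`. -/
noncomputable def piR (W : WeakHopfData k H) (h : H) : H :=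
  (TensorProduct.rid k H) ((LinearMap.lTensor H (W.ε ∘ₗ LinearMap.mulLeft k h)) (W.Δ 1))

/-- `H^L = im(Π^L)`. -/
def HL (W : WeakHopfData k H) : Set H := Set.range (piL W)

/-- `H^R = im(Π^R)`. -/
def HR (W : WeakHopfData k H) : Set H := Set.range (piR W)

/-- The axioms of a weak Hopf algebra with bijective antipode, where Sweedler
sums are expressed via arbitrary finite representations of the comultiplication. -/
structure IsWeakHopf (W : WeakHopfData k H) : Prop where
  coassoc : ∀ h : H,
    (TensorProduct.assoc k H H H) ((LinearMap.rTensor H W.Δ) (W.Δ h)) =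
      (LinearMap.lTensor H W.Δ) (W.Δ h)
  counit_left : ∀ h : H, (TensorProduct.lid k H) ((LinearMap.rTensor H W.ε) (W.Δ h)) = h
  counit_right : ∀ h : H, (TensorProduct.rid k H) ((LinearMap.lTensor H W.ε) (W.Δ h)) = h
  comul_mul : ∀ h l : H, W.Δ (h * l) = W.Δ h * W.Δ l
  weak_comul_one₁ : (LinearMap.lTensor H W.Δ) (W.Δ 1) =
    (TensorProduct.assoc k H H H) (W.Δ 1 ⊗ₜ[k] (1 : H)) * ((1 : H) ⊗ₜ[k] W.Δ 1)
  weak_comul_one₂ : (LinearMap.lTensor H W.Δ) (W.Δ 1) =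
    ((1 : H) ⊗ₜ[k] W.Δ 1) * (TensorProduct.assoc k H H H) (W.Δ 1 ⊗ₜ[k] (1 : H))
  weak_counit : ∀ h l m : H, ∀ (n : ℕ) (x y : Fin n → H),
    W.Δ l = ∑ i, x i ⊗ₜ[k] y i →
      W.ε (h * l * m) = ∑ i, W.ε (h * x i) * W.ε (y i * m) ∧
      W.ε (h * l * m) = ∑ i, W.ε (h * y i) * W.ε (x i * m)
  antipode_left : ∀ h : H, ∀ (n : ℕ) (x y : Fin n → H),
    W.Δ h = ∑ i, x i ⊗ₜ[k] y i → ∑ i, x i * W.S (y i) = piL W h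
  antipode_right : ∀ h : H, ∀ (n : ℕ) (x y : Fin n → H),
    W.Δ h = ∑ i, x i ⊗ₜ[k] y i → ∑ i, W.S (x i) * y i = piR W h
  antipode_mid : ∀ h : H, ∀ (n : ℕ) (x y : Fin n → H),
    W.Δ h = ∑ i, x i ⊗ₜ[k] y i →
      ∀ (m : Fin n → ℕ) (u v : (i : Fin n) → Fin (m i) → H),
        (∀ i, W.Δ (y i) = ∑ j, u i j ⊗ₜ[k] v i j) →
          ∑ i, ∑ j, W.S (x i) * u i j * W.S (v i j) = W.S h
  S_Sinv : ∀ h : H, W.S (W.Sinv h) = h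
  Sinv_S : ∀ h : H, W.Sinv (W.S h) = h

/-- Condition (1): `h·1_A = Π^L(h)·1_A`. -/
def cond1 (W : WeakHopfData k H) (ρ : H →ₗ[k] A →ₗ[k] A) : Prop :=
  ∀ h : H, ρ h 1 = ρ (piL W h) 1

/-- Condition (2): `h·(aa') = (h⁽¹⁾·a)(h⁽²⁾·a')`. -/
def cond2 (W : WeakHopfData k H) (ρ : H →ₗ[k] A →ₗ[k] A) : Prop :=
  ∀ (h : H) (a a' : A) (n : ℕ) (x y : Fin n → H),
    W.Δ h = ∑ i, x i ⊗ₜ[k] y i → ρ h (a * a') = ∑ i, ρ (x i) a * ρ (y i) a'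

/-- Condition (3): `S⁻¹(l)h·a = (h·a)(l·1_A)` and `lh·a = (l·1_A)(h·a)` for `l ∈ H^L`. -/
def cond3 (W : WeakHopfData k H) (ρ : H →ₗ[k] A →ₗ[k] A) : Prop :=
  ∀ (h : H) (a : A), ∀ l ∈ HL W,
    ρ (W.Sinv l * h) a = ρ h a * ρ l 1 ∧ ρ (l * h) a = ρ l 1 * ρ h a

/-- Condition (4): `1·a = a`. -/
def cond4 (ρ : H →ₗ[k] A →ₗ[k] A) : Prop := ∀ a : A, ρ 1 a = a

/-- Condition (5). -/
def cond5 (W : WeakHopfData k H) (ρ : H →ₗ[k] A →ₗ[k] A) (σ : H → H → A) : Prop :=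
  ∀ (h g : H), ∀ l ∈ HL W,
    σ (l * h) g = ρ l 1 * σ h g ∧ σ (W.Sinv l * h) g = σ h g * ρ l 1

/-- Condition (6): `(h⁽¹⁾·(l·1_A))σ(h⁽²⁾,k) = σ(h,lk)` for `l ∈ H^L`. -/
def cond6 (W : WeakHopfData k H) (ρ : H →ₗ[k] A →ₗ[k] A) (σ : H → H → A) : Prop :=
  ∀ (h g : H), ∀ l ∈ HL W, ∀ (n : ℕ) (x y : Fin n → H),
    W.Δ h = ∑ i, x i ⊗ₜ[k] y i →
      ∑ i, ρ (x i) (ρ l 1) * σ (y i) g = σ h (l * g)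

/-- Condition (7): `σ(1,h) = σ(h,1) = h·1_A`. -/
def cond7 (ρ : H →ₗ[k] A →ₗ[k] A) (σ : H → H → A) : Prop :=
  ∀ h : H, σ 1 h = ρ h 1 ∧ σ h 1 = ρ h 1

/-- Condition (8), the cocycle condition. -/
def cond8 (W : WeakHopfData k H) (ρ : H →ₗ[k] A →ₗ[k] A) (σ : H → H → A) : Prop :=
  ∀ (h g m : H) (n₁ : ℕ) (x₁ y₁ : Fin n₁ → H) (n₂ : ℕ) (x₂ y₂ : Fin n₂ → H)
    (n₃ : ℕ) (x₃ y₃ : Fin n₃ → H),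
    W.Δ h = ∑ i, x₁ i ⊗ₜ[k] y₁ i → W.Δ g = ∑ i, x₂ i ⊗ₜ[k] y₂ i →
    W.Δ m = ∑ i, x₃ i ⊗ₜ[k] y₃ i →
      ∑ i, ∑ j, ∑ p, ρ (x₁ i) (σ (x₂ j) (x₃ p)) * σ (y₁ i) (y₂ j * y₃ p) =
        ∑ i, ∑ j, σ (x₁ i) (x₂ j) * σ (y₁ i * y₂ j) m

/-- Condition (9), the twisted module condition. -/
def cond9 (W : WeakHopfData k H) (ρ : H →ₗ[k] A →ₗ[k] A) (σ : H → H → A) : Prop :=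
  ∀ (h g : H) (a : A) (n : ℕ) (x y : Fin n → H) (m : ℕ) (u v : Fin m → H),
    W.Δ h = ∑ i, x i ⊗ₜ[k] y i → W.Δ g = ∑ j, u j ⊗ₜ[k] v j →
      ∑ i, ∑ j, ρ (x i) (ρ (u j) a) * σ (y i) (v j) =
        ∑ i, ∑ j, σ (x i) (u j) * ρ (y i * v j) a

/-- Condition (10): `h·(l·1_A) = hl·1_A` for `l ∈ H^L`. -/
def cond10 (W : WeakHopfData k H) (ρ : H →ₗ[k] A →ₗ[k] A) : Prop :=
  ∀ h : H, ∀ l ∈ HL W, ρ h (ρ l 1) = ρ (h * l) 1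

/-- Condition (11): `h·(l·1_A) = hl·1_A` for all `h, l ∈ H`. -/
def cond11 (ρ : H →ₗ[k] A →ₗ[k] A) : Prop :=
  ∀ h l : H, ρ h (ρ l 1) = ρ (h * l) 1

/-- Condition (12): `σ(h,l) = σ(hl,1)` for `l ∈ H^L`. -/
def cond12 (W : WeakHopfData k H) (σ : H → H → A) : Prop :=
  ∀ h : H, ∀ l ∈ HL W, σ h l = σ (h * l) 1

/-- Condition (13). -/
def cond13 (W : WeakHopfData k H) (ρ : H →ₗ[k] A →ₗ[k] A) (σbar : H → H → A) : Prop :=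
  ∀ (h g : H) (n : ℕ) (x y : Fin n → H) (m : ℕ) (u v : Fin m → H),
    W.Δ h = ∑ i, x i ⊗ₜ[k] y i → W.Δ g = ∑ j, u j ⊗ₜ[k] v j →
      σbar h g = ∑ i, ∑ j, ρ (x i * u j) 1 * σbar (y i) (v j)

/-- Condition (14). -/
def cond14 (W : WeakHopfData k H) (ρ : H →ₗ[k] A →ₗ[k] A) (σbar : H → H → A) : Prop :=
  ∀ (h g : H), ∀ l ∈ HL W,
    σbar (l * h) g = ρ l 1 * σbar h g ∧ σbar (W.Sinv l * h) g = σbar h g * ρ l 1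

/-- Condition (15). -/
def cond15 (W : WeakHopfData k H) (ρ : H →ₗ[k] A →ₗ[k] A) (σbar : H → H → A) : Prop :=
  ∀ (h g : H), ∀ l ∈ HL W, ∀ (n : ℕ) (x y : Fin n → H),
    W.Δ h = ∑ i, x i ⊗ₜ[k] y i →
      ∑ i, σbar (x i) g * ρ (y i) (ρ l 1) = σbar h (W.Sinv l * g)

/-- Condition (16). -/
def cond16 (W : WeakHopfData k H) (ρ : H →ₗ[k] A →ₗ[k] A) (σ σbar : H → H → A) : Prop :=
  ∀ (h g : H) (n : ℕ) (x y : Fin n → H) (m : ℕ) (u v : Fin m → H),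
    W.Δ h = ∑ i, x i ⊗ₜ[k] y i → W.Δ g = ∑ j, u j ⊗ₜ[k] v j →
      (∑ i, ∑ j, σ (x i) (u j) * σbar (y i) (v j) = ρ h (ρ g 1)) ∧
      (∑ i, ∑ j, σbar (x i) (u j) * σ (y i) (v j) = ρ (h * g) 1)

/-- Condition (17), the cocycle condition for `ς : H ⊗ H → A`. -/
def cond17 (W : WeakHopfData k H) (ρ : H →ₗ[k] A →ₗ[k] A) (ς : H ⊗[k] H → A) : Prop :=
  ∀ (h g m : H) (n₁ : ℕ) (x₁ y₁ : Fin n₁ → H) (n₂ : ℕ) (x₂ y₂ : Fin n₂ → H)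
    (n₃ : ℕ) (x₃ y₃ : Fin n₃ → H),
    W.Δ h = ∑ i, x₁ i ⊗ₜ[k] y₁ i → W.Δ g = ∑ i, x₂ i ⊗ₜ[k] y₂ i →
    W.Δ m = ∑ i, x₃ i ⊗ₜ[k] y₃ i →
      ∑ i, ∑ j, ∑ p, ρ (x₁ i) (ς (x₂ j ⊗ₜ[k] x₃ p)) * ς (y₁ i ⊗ₜ[k] (y₂ j * y₃ p)) =
        ∑ i, ∑ j, ς (x₁ i ⊗ₜ[k] x₂ j) * ς ((y₁ i * y₂ j) ⊗ₜ[k] m)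

/-- Condition (18), the twisted module condition for `ς : H ⊗ H → A`. -/
def cond18 (W : WeakHopfData k H) (ρ : H →ₗ[k] A →ₗ[k] A) (ς : H ⊗[k] H → A) : Prop :=
  ∀ (h g : H) (a : A) (n : ℕ) (x y : Fin n → H) (m : ℕ) (u v : Fin m → H),
    W.Δ h = ∑ i, x i ⊗ₜ[k] y i → W.Δ g = ∑ j, u j ⊗ₜ[k] v j →
      ∑ i, ∑ j, ρ (x i) (ρ (u j) a) * ς (y i ⊗ₜ[k] v j) =
        ∑ i, ∑ j, ς (x i ⊗ₜ[k] u j) * ρ (y i * v j) a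

/-- Condition (19). -/
def cond19 (W : WeakHopfData k H) (ρ : H →ₗ[k] A →ₗ[k] A) (ς : H ⊗[k] H → A) : Prop :=
  ∀ (h g : H) (n : ℕ) (x y : Fin n → H) (m : ℕ) (u v : Fin m → H),
    W.Δ h = ∑ i, x i ⊗ₜ[k] y i → W.Δ g = ∑ j, u j ⊗ₜ[k] v j →
      ς (h ⊗ₜ[k] g) = ∑ i, ∑ j, ς (x i ⊗ₜ[k] u j) * ρ (y i * v j) 1

/-- Condition (20). -/
def cond20 (W : WeakHopfData k H) (ρ : H →ₗ[k] A →ₗ[k] A) (ς : H ⊗[k] H → A) : Prop :=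
  ∀ (h : H) (n : ℕ) (x y : Fin n → H) (m : ℕ) (u v : Fin m → H),
    W.Δ h = ∑ i, x i ⊗ₜ[k] y i → W.Δ 1 = ∑ j, u j ⊗ₜ[k] v j →
      ρ h 1 = ∑ i, ∑ j, ρ (x i) (ρ (u j) 1) * ς (y i ⊗ₜ[k] v j)

/-- Condition (21). -/
def cond21 (W : WeakHopfData k H) (ρ : H →ₗ[k] A →ₗ[k] A) (ς : H ⊗[k] H → A) : Prop :=
  ∀ (h : H) (m : ℕ) (u v : Fin m → H),
    W.Δ 1 = ∑ j, u j ⊗ₜ[k] v j →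
      ρ h 1 = ∑ j, ρ (u j) 1 * ς (v j ⊗ₜ[k] h)

/-- Condition (22): `a(1⁽¹⁾·1_A) ⊗ 1⁽²⁾ = (1⁽¹⁾·a) ⊗ 1⁽²⁾` in `A ⊗ H`. -/
def cond22 (W : WeakHopfData k H) (ρ : H →ₗ[k] A →ₗ[k] A) : Prop :=
  ∀ (a : A) (m : ℕ) (u v : Fin m → H),
    W.Δ 1 = ∑ j, u j ⊗ₜ[k] v j →
      (∑ j, (a * ρ (u j) 1) ⊗ₜ[k] v j) = ∑ j, (ρ (u j) a) ⊗ₜ[k] v j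

/-- Condition (23). -/
def cond23 (W : WeakHopfData k H) (ρ : H →ₗ[k] A →ₗ[k] A) (ςbar : H ⊗[k] H → A) : Prop :=
  ∀ (h g : H) (n : ℕ) (x y : Fin n → H) (m : ℕ) (u v : Fin m → H),
    W.Δ h = ∑ i, x i ⊗ₜ[k] y i → W.Δ g = ∑ j, u j ⊗ₜ[k] v j →
      ςbar (h ⊗ₜ[k] g) = ∑ i, ∑ j, ρ (x i * u j) 1 * ςbar (y i ⊗ₜ[k] v j)

/-- Condition (24). -/
def cond24 (W : WeakHopfData k H) (ρ : H →ₗ[k] A →ₗ[k] A) (ς ςbar : H ⊗[k] H → A) : Prop :=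
  ∀ (h g : H) (n : ℕ) (x y : Fin n → H) (m : ℕ) (u v : Fin m → H),
    W.Δ h = ∑ i, x i ⊗ₜ[k] y i → W.Δ g = ∑ j, u j ⊗ₜ[k] v j →
      (∑ i, ∑ j, ς (x i ⊗ₜ[k] u j) * ςbar (y i ⊗ₜ[k] v j) = ρ (h * g) 1) ∧
      (∑ i, ∑ j, ςbar (x i ⊗ₜ[k] u j) * ς (y i ⊗ₜ[k] v j) = ρ (h * g) 1)

/-- `σ` is `H^R`-balanced: `σ(hr,k) = σ(h,rk)` for `r ∈ H^R`. -/
def HRBalanced (W : WeakHopfData k H) (σ : H → H → A) : Prop :=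
  ∀ (h g : H), ∀ r ∈ HR W, σ (h * r) g = σ h (r * g)

/-- `σbar` is `H^L`-balanced: `σbar(hl,k) = σbar(h,lk)` for `l ∈ H^L`. -/
def HLBalanced (W : WeakHopfData k H) (σbar : H → H → A) : Prop :=
  ∀ (h g : H), ∀ l ∈ HL W, σbar (h * l) g = σbar h (l * g)

/-- The idempotent `∇ρ : A ⊗ H → A ⊗ H`, `a ⊗ h ↦ a(h⁽¹⁾·1_A) ⊗ h⁽²⁾`. -/
noncomputable def nabla (W : WeakHopfData k H) (ρ : H →ₗ[k] A →ₗ[k] A) :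
    A ⊗[k] H →ₗ[k] A ⊗[k] H :=
  (LinearMap.rTensor H (LinearMap.mul' k A ∘ₗ LinearMap.lTensor A (ρ.flip 1))) ∘ₗ
    (TensorProduct.assoc k A H H).symm.toLinearMap ∘ₗ LinearMap.lTensor A W.Δ

/-- The subspace `N` of `A ⊗ H` spanned by the elements
`a(l·1_A) ⊗ h - a ⊗ lh` with `l ∈ H^L`, so that `(A ⊗ H)/N = A ⊗_{H^L} H`. -/
def relN (W : WeakHopfData k H) (ρ : H →ₗ[k] A →ₗ[k] A) : Submodule k (A ⊗[k] H) :=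
  Submodule.span k
    {z | ∃ (a : A) (l h : H), l ∈ HL W ∧ z = (a * ρ l 1) ⊗ₜ[k] h - a ⊗ₜ[k] (l * h)}

/-- The map `σ̃(h,k) := (h⁽¹⁾k⁽¹⁾·1_A)σ̄(h⁽²⁾,k⁽²⁾)`. -/
noncomputable def sigmaTilde (W : WeakHopfData k H) (ρ : H →ₗ[k] A →ₗ[k] A)
    (σbar : H →ₗ[k] H →ₗ[k] A) : H → H → A := fun h g =>
  LinearMap.mul' k A
    ((TensorProduct.map ((ρ.flip 1) ∘ₗ LinearMap.mul' k H) (TensorProduct.lift σbar))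
      ((TensorProduct.tensorTensorTensorComm k H H H H) (W.Δ h ⊗ₜ[k] W.Δ g)))

end


/-!
The point is that `S` maps `H^R` into `H^L`: for `r ∈ H^R` one has `Δ(r) = 1⁽¹⁾ ⊗ r1⁽²⁾` and
`Π^R(1⁽¹⁾) ⊗ 1⁽²⁾ = Δ(1)`, so `S(x) = Π^R(x⁽¹⁾)S(x⁽²⁾)` gives
`S(r) = Π^R(1⁽¹⁾)S(r1⁽²⁾) = 1⁽¹⁾S(r1⁽²⁾) = Π^L(r)`. Hence every `r ∈ H^R` is `S⁻¹(l')` with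
`l' ∈ H^L`, and by condition (3) both `lS⁻¹(l')·(g·a)` and `lS⁻¹(l')g·a` equal
`(l·1_A)(g·a)(l'·1_A)`.
-/

open TensorProduct LinearMap

namespace WeakHopfData

variable {k H : Type*} [Field k] [Ring H] [Algebra k H] {W : WeakHopfData k H}

lemma piR_eq_sum (h : H) {n : ℕ} {u v : Fin n → H}
    (hrep : W.Δ 1 = ∑ j, u j ⊗ₜ[k] v j) :
    piR W h = ∑ j, W.ε (h * v j) • u j := by
  simp [piR, hrep, TensorProduct.rid_tmul]

lemma mul_rTensor_S_comul (hW : IsWeakHopf W) (x : H) :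
    mul' k H (rTensor H W.S (W.Δ x)) = piR W x := by
  obtain ⟨n, xs, ys, hrep⟩ := exists_sum_tmul_eq (W.Δ x)
  simpa [hrep] using hW.antipode_right x n xs ys hrep

lemma mul_lTensor_S_comul (hW : IsWeakHopf W) (x : H) :
    mul' k H (lTensor H W.S (W.Δ x)) = piL W x := by
  obtain ⟨n, xs, ys, hrep⟩ := exists_sum_tmul_eq (W.Δ x)
  simpa [hrep] using hW.antipode_left x n xs ys hrep

lemma S_eq_sum_piR_mul_S (hW : IsWeakHopf W) {x : H} {n : ℕ} {xs ys : Fin n → H}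
    (hrep : W.Δ x = ∑ j, xs j ⊗ₜ[k] ys j) :
    W.S x = ∑ j, piR W (xs j) * W.S (ys j) := by
  choose m u v huv using fun j => exists_sum_tmul_eq (W.Δ (ys j))
  -- evaluate `(a ⊗ b) ⊗ c ↦ S(a) b S(c)` on both sides of coassociativity
  let G : (H ⊗[k] H) ⊗[k] H →ₗ[k] H := mul' k H ∘ₗ map (mul' k H ∘ₗ rTensor H W.S) W.S
  have hcoassoc := congrArg (G ∘ₗ (TensorProduct.assoc k H H H).symm.toLinearMap) (hW.coassoc x)
  simp only [LinearMap.comp_apply, LinearEquiv.coe_coe, LinearEquiv.symm_apply_apply] at hcoassoc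
  rw [← hW.antipode_mid x n xs ys hrep m u v huv]
  simpa [G, hrep, huv, tmul_sum, mul_assoc, mul_rTensor_S_comul hW] using hcoassoc.symm

lemma comul_piR (hW : IsWeakHopf W) (h : H) {n : ℕ} {u v : Fin n → H}
    (hrep : W.Δ 1 = ∑ j, u j ⊗ₜ[k] v j) :
    W.Δ (piR W h) = ∑ j, u j ⊗ₜ[k] (v j * piR W h) := by
  -- contracting the last factor of `(Δ ⊗ id)Δ(1)` against `ε(h ·)` gives `Δ(Π^R(h))`
  let F : (H ⊗[k] H) ⊗[k] H →ₗ[k] H ⊗[k] H :=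
    (TensorProduct.rid k (H ⊗[k] H)).toLinearMap ∘ₗ lTensor (H ⊗[k] H) (W.ε ∘ₗ mulLeft k h)
  have hweak := congrArg (F ∘ₗ (TensorProduct.assoc k H H H).symm.toLinearMap)
    ((hW.coassoc 1).trans hW.weak_comul_one₁)
  simp only [LinearMap.comp_apply, LinearEquiv.coe_coe, LinearEquiv.symm_apply_apply, hrep,
    sum_tmul, tmul_sum, map_sum, Finset.sum_mul_sum] at hweak
  simpa [F, piR_eq_sum h hrep, Finset.mul_sum, tmul_sum, tmul_smul] using hweak

lemma sum_piR_tmul_eq_comul_one (hW : IsWeakHopf W) {n : ℕ} {u v : Fin n → H}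
    (hrep : W.Δ 1 = ∑ j, u j ⊗ₜ[k] v j) :
    ∑ j, piR W (u j) ⊗ₜ[k] v j = W.Δ 1 := by
  let F : H ⊗[k] (H ⊗[k] H) →ₗ[k] H ⊗[k] H :=
    lTensor H ((TensorProduct.lid k H).toLinearMap ∘ₗ rTensor H W.ε)
  have hweak := congrArg F hW.weak_comul_one₂
  simpa [F, piR_eq_sum _ hrep, hrep, tmul_sum, sum_tmul, Finset.sum_mul_sum, hW.counit_left,
    smul_tmul'] using hweak.symm

theorem S_piR (hW : IsWeakHopf W) (h : H) : W.S (piR W h) = piL W (piR W h) := by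
  obtain ⟨n, u, v, hrep⟩ := exists_sum_tmul_eq (W.Δ (1 : H))
  have hmul := congrArg (mul' k H ∘ₗ lTensor H (W.S ∘ₗ mulRight k (piR W h)))
    (sum_piR_tmul_eq_comul_one hW hrep)
  rw [S_eq_sum_piR_mul_S hW (comul_piR hW h hrep), ← mul_lTensor_S_comul hW, comul_piR hW h hrep]
  simpa [hrep] using hmul

lemma S_mem_HL_of_mem_HR (hW : IsWeakHopf W) {r : H} (hr : r ∈ HR W) : W.S r ∈ HL W := by
  obtain ⟨h, rfl⟩ := hr
  exact ⟨piR W h, (S_piR hW h).symm⟩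

end WeakHopfData

section Measuring

variable {k H A : Type*} [Field k] [Ring H] [Algebra k H] [Ring A] [Algebra k A]
  {W : WeakHopfData k H} {ρ : H →ₗ[k] A →ₗ[k] A}

lemma act_Sinv_eq_mul_act_one (h3 : cond3 W ρ) (h4 : cond4 ρ) {l : H} (hl : l ∈ HL W) (b : A) :
    ρ (W.Sinv l) b = b * ρ l 1 := by
  simpa [h4 b] using (h3 1 b l hl).1

lemma act_mul_Sinv_act_eq_act_mul (h3 : cond3 W ρ) (h4 : cond4 ρ) {l l' : H} (hl : l ∈ HL W)
    (hl' : l' ∈ HL W) (g : H) (a : A) :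
    ρ (l * W.Sinv l') (ρ g a) = ρ (l * W.Sinv l' * g) a := by
  rw [(h3 _ _ l hl).2, mul_assoc, (h3 _ _ l hl).2, (h3 g a l' hl').1,
    act_Sinv_eq_mul_act_one h3 h4 hl']

end Measuring

theorem statement0_general {k H A : Type*} [Field k] [Ring H] [Algebra k H] [Ring A] [Algebra k A]
    (W : WeakHopfData k H) (hW : IsWeakHopf W) (ρ : H →ₗ[k] A →ₗ[k] A)
    (h3 : cond3 W ρ) (h4 : cond4 ρ) :
    ∀ l ∈ HL W, ∀ r ∈ HR W, ∀ (g : H) (a : A),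
      ρ (l * r) (ρ g a) = ρ (l * r * g) a := by
  intro l hl r hr g a
  rw [← hW.Sinv_S r]
  exact act_mul_Sinv_act_eq_act_mul h3 h4 hl (W.S_mem_HL_of_mem_HR hW hr) g a

/-- if `ρ` is a unital measuring (conditions (1)–(4)), then
`(lr)·(k·a) = (lrk)·a` for all `l ∈ H^L`, `r ∈ H^R`, `k ∈ H`, `a ∈ A`. -/
theorem statement0 {k H A : Type*} [Field k] [Ring H] [Algebra k H] [Ring A] [Algebra k A]
    (W : WeakHopfData k H) (hW : IsWeakHopf W) (ρ : H →ₗ[k] A →ₗ[k] A)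
    (h1 : cond1 W ρ) (h2 : cond2 W ρ) (h3 : cond3 W ρ) (h4 : cond4 ρ) :
    ∀ l ∈ HL W, ∀ r ∈ HR W, ∀ (g : H) (a : A),
      ρ (l * r) (ρ g a) = ρ (l * r * g) a :=
  statement0_general W hW ρ h3 h4
end

section
/- Assume ρ is a unital measuring (conditions (1)–(4)) and σ:H×H→A is a k-bilinear map that is H^R-balanced (σ(hr,k)=σ(h,rk) for all r∈H^R) and satisfies conditions (6) and (9). Then σ(h,k) = σ(h⁽¹⁾,k⁽¹⁾)(h⁽²⁾k⁽²⁾·1_A) for all h,k ∈ H. -/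
open scoped TensorProduct

/-!
Every `g` factors as `g = Π^L(g⁽¹⁾) g⁽²⁾`: apply `ε ⊗ id` to `Δ(g) = Δ(1)Δ(g)`. Condition (6)
moves the left factor out of the second argument of `σ`, and by (1) `Π^L(g⁽¹⁾)·1_A = g⁽¹⁾·1_A`,
so `σ(h,g) = (h⁽¹⁾·(g⁽¹⁾·1_A))σ(h⁽²⁾,g⁽²⁾)`. This is the left side of (9) at `a = 1_A`.
-/

theorem TensorProduct.exists_fin_sum_tmul {R M N : Type*} [CommSemiring R] [AddCommMonoid M]
    [AddCommMonoid N] [Module R M] [Module R N] (t : M ⊗[R] N) :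
    ∃ (n : ℕ) (x : Fin n → M) (y : Fin n → N), t = ∑ i, x i ⊗ₜ[R] y i := by
  obtain ⟨S, hS⟩ := TensorProduct.exists_finset t
  refine ⟨S.card, fun i => (S.equivFin.symm i).1.1, fun i => (S.equivFin.symm i).1.2, ?_⟩
  rw [hS, ← Finset.sum_coe_sort S, ← Equiv.sum_comp S.equivFin.symm]

section

variable {k H A : Type*} [Field k] [Ring H] [Algebra k H] [Ring A] [Algebra k A]
  {W : WeakHopfData k H}

theorem piL_eq_sum_of_comul_one {p : ℕ} {e f : Fin p → H} (h1 : W.Δ 1 = ∑ q, e q ⊗ₜ[k] f q)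
    (z : H) : piL W z = ∑ q, W.ε (e q * z) • f q := by
  simp [piL, h1, map_sum]

theorem IsWeakHopf.sum_piL_mul_eq (hW : IsWeakHopf W) {g : H} {m : ℕ} {u v : Fin m → H}
    (hg : W.Δ g = ∑ j, u j ⊗ₜ[k] v j) : ∑ j, piL W (u j) * v j = g := by
  obtain ⟨p, e, f, h1⟩ := TensorProduct.exists_fin_sum_tmul (W.Δ (1 : H))
  have hΔg : W.Δ g = ∑ q, ∑ j, (e q * u j) ⊗ₜ[k] (f q * v j) := by
    rw [← one_mul g, hW.comul_mul, h1, hg, Finset.sum_mul_sum]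
    simp only [Algebra.TensorProduct.tmul_mul_tmul]
  have hcounit := hW.counit_left g
  rw [hΔg] at hcounit
  simp only [map_sum, LinearMap.rTensor_tmul, TensorProduct.lid_tmul] at hcounit
  rw [← hcounit, Finset.sum_comm]
  refine Finset.sum_congr rfl fun j _ => ?_
  rw [piL_eq_sum_of_comul_one h1, Finset.sum_mul]
  simp only [smul_mul_assoc]

theorem sigma_eq_sum_rho_rho_mul_sigma (hW : IsWeakHopf W) {ρ : H →ₗ[k] A →ₗ[k] A}
    {σ : H →ₗ[k] H →ₗ[k] A} (h1 : cond1 W ρ) (h6 : cond6 W ρ (fun h g => σ h g))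
    {h g : H} {n : ℕ} {x y : Fin n → H} {m : ℕ} {u v : Fin m → H}
    (hh : W.Δ h = ∑ i, x i ⊗ₜ[k] y i) (hg : W.Δ g = ∑ j, u j ⊗ₜ[k] v j) :
    σ h g = ∑ i, ∑ j, ρ (x i) (ρ (u j) 1) * σ (y i) (v j) := by
  calc σ h g = ∑ j, σ h (piL W (u j) * v j) := by
        rw [← map_sum, hW.sum_piL_mul_eq hg]
    _ = ∑ j, ∑ i, ρ (x i) (ρ (piL W (u j)) 1) * σ (y i) (v j) :=
        Finset.sum_congr rfl fun j _ => (h6 h (v j) _ ⟨u j, rfl⟩ n x y hh).symm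
    _ = ∑ i, ∑ j, ρ (x i) (ρ (u j) 1) * σ (y i) (v j) := by
        rw [Finset.sum_comm]
        simp only [← h1 (u _)]

end

theorem statement1_general {k H A : Type*} [Field k] [Ring H] [Algebra k H] [Ring A] [Algebra k A]
    (W : WeakHopfData k H) (hW : IsWeakHopf W) (ρ : H →ₗ[k] A →ₗ[k] A)
    (h1 : cond1 W ρ)
    (σb : H →ₗ[k] H →ₗ[k] A)
    (h6 : cond6 W ρ (fun h g => σb h g)) (h9 : cond9 W ρ (fun h g => σb h g)) :
    ∀ (h g : H) (n : ℕ) (x y : Fin n → H) (m : ℕ) (u v : Fin m → H),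
      W.Δ h = ∑ i, x i ⊗ₜ[k] y i → W.Δ g = ∑ j, u j ⊗ₜ[k] v j →
        σb h g = ∑ i, ∑ j, σb (x i) (u j) * ρ (y i * v j) 1 := by
  intro h g n x y m u v hh hg
  rw [sigma_eq_sum_rho_rho_mul_sigma hW h1 h6 hh hg]
  exact h9 h g 1 n x y m u v hh hg

/-- under conditions (1)–(4), (6) and (9), one has
`σ(h,k) = σ(h⁽¹⁾,k⁽¹⁾)(h⁽²⁾k⁽²⁾·1_A)`. -/
theorem statement1 {k H A : Type*} [Field k] [Ring H] [Algebra k H] [Ring A] [Algebra k A]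
    (W : WeakHopfData k H) (hW : IsWeakHopf W) (ρ : H →ₗ[k] A →ₗ[k] A)
    (h1 : cond1 W ρ) (h2 : cond2 W ρ) (h3 : cond3 W ρ) (h4 : cond4 ρ)
    (σb : H →ₗ[k] H →ₗ[k] A)
    (hbal : HRBalanced W (fun h g => σb h g))
    (h6 : cond6 W ρ (fun h g => σb h g)) (h9 : cond9 W ρ (fun h g => σb h g)) :
    ∀ (h g : H) (n : ℕ) (x y : Fin n → H) (m : ℕ) (u v : Fin m → H),
      W.Δ h = ∑ i, x i ⊗ₜ[k] y i → W.Δ g = ∑ j, u j ⊗ₜ[k] v j →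
        σb h g = ∑ i, ∑ j, σb (x i) (u j) * ρ (y i * v j) 1 :=
  statement1_general W hW ρ h1 σb h6 h9
end

section
/- Assume ρ is a unital measuring (conditions (1)–(4)), σ:H×H→A is a k-bilinear H^R-balanced map, and σ̄:H×H→A is a k-bilinear H^L-balanced map (σ̄(hl,k)=σ̄(h,lk) for all l∈H^L) satisfying conditions (13) and (16). Then σ̄(h⁽¹⁾,k⁽¹⁾)(h⁽²⁾·(k⁽²⁾·1_A)) = σ̄(h,k) for all h,k∈H. -/
open scoped TensorProduct

/-! The identity is associativity of convolution. Although `H` is only a weak bialgebra, its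
comultiplication is coassociative and counital, so the linear maps `H ⊗ H → A` form an
associative convolution algebra. Write `ρ₂(h,k) = h·(k·1_A)` and `μ(h,k) = hk·1_A`: condition (16)
says `σ * σ̄ = ρ₂` and `σ̄ * σ = μ`, and condition (13) says `μ * σ̄ = σ̄`. Hence
`σ̄ * ρ₂ = σ̄ * σ * σ̄ = μ * σ̄ = σ̄`. -/

open Coalgebra WithConv

theorem TensorProduct.exists_eq_sum_fin_tmul {R M N : Type*} [CommSemiring R]
    [AddCommMonoid M] [Module R M] [AddCommMonoid N] [Module R N] (t : M ⊗[R] N) :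
    ∃ (n : ℕ) (x : Fin n → M) (y : Fin n → N), t = ∑ i, x i ⊗ₜ[R] y i := by
  obtain ⟨S, rfl⟩ := TensorProduct.exists_finset t
  refine ⟨S.card, fun i => (S.equivFin.symm i).1.1, fun i => (S.equivFin.symm i).1.2, ?_⟩
  rw [← Finset.sum_attach S (fun p => p.1 ⊗ₜ[R] p.2)]
  exact (Equiv.sum_comp S.equivFin.symm (fun p => p.1.1 ⊗ₜ[R] p.1.2)).symm

section Convolution

variable {R A C D : Type*} [CommSemiring R] [Semiring A] [Algebra R A]
  [AddCommMonoid C] [Module R C] [CoalgebraStruct R C]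
  [AddCommMonoid D] [Module R D] [CoalgebraStruct R D]

theorem LinearMap.convMul_apply_tmul (F G : WithConv (C ⊗[R] D →ₗ[R] A)) {c : C} {d : D}
    {n : ℕ} {x y : Fin n → C} {m : ℕ} {u v : Fin m → D}
    (hc : comul c = ∑ i, x i ⊗ₜ[R] y i) (hd : comul d = ∑ j, u j ⊗ₜ[R] v j) :
    (F * G) (c ⊗ₜ d) = ∑ i, ∑ j, F (x i ⊗ₜ u j) * G (y i ⊗ₜ v j) := by
  simp only [convMul_apply, TensorProduct.comul_tmul, hc, hd, TensorProduct.tmul_sum,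
    TensorProduct.sum_tmul, map_sum, TensorProduct.AlgebraTensorModule.tensorTensorTensorComm_tmul,
    TensorProduct.map_tmul, LinearMap.mul'_apply]
  exact Finset.sum_comm

theorem LinearMap.convMul_eq_of_sum_tmul {F G K : WithConv (C ⊗[R] D →ₗ[R] A)}
    (hK : ∀ (c : C) (d : D) (n : ℕ) (x y : Fin n → C) (m : ℕ) (u v : Fin m → D),
      comul c = ∑ i, x i ⊗ₜ[R] y i → comul d = ∑ j, u j ⊗ₜ[R] v j →
        ∑ i, ∑ j, F (x i ⊗ₜ u j) * G (y i ⊗ₜ v j) = K (c ⊗ₜ d)) :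
    F * G = K := by
  refine WithConv.ext (TensorProduct.ext' fun c d => ?_)
  obtain ⟨n, x, y, hc⟩ := TensorProduct.exists_eq_sum_fin_tmul (comul (R := R) c)
  obtain ⟨m, u, v, hd⟩ := TensorProduct.exists_eq_sum_fin_tmul (comul (R := R) d)
  exact (LinearMap.convMul_apply_tmul F G hc hd).trans (hK c d n x y m u v hc hd)

end Convolution

namespace WeakHopfData

variable {k H : Type*} [Field k] [Ring H] [Algebra k H]

abbrev toCoalgebra (W : WeakHopfData k H) (hW : IsWeakHopf W) : Coalgebra k H where
  comul := W.Δ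
  counit := W.ε
  coassoc := LinearMap.ext hW.coassoc
  rTensor_counit_comp_comul := LinearMap.ext fun h =>
    (TensorProduct.lid k H).injective (by simpa using hW.counit_left h)
  lTensor_counit_comp_comul := LinearMap.ext fun h =>
    (TensorProduct.rid k H).injective (by simpa using hW.counit_right h)

end WeakHopfData

theorem statement3_general {k H A : Type*} [Field k] [Ring H] [Algebra k H] [Ring A] [Algebra k A]
    (W : WeakHopfData k H) (hW : IsWeakHopf W) (ρ : H →ₗ[k] A →ₗ[k] A)
    (σb : H →ₗ[k] H →ₗ[k] A)
    (σc : H →ₗ[k] H →ₗ[k] A)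
    (h13 : cond13 W ρ (fun h g => σc h g))
    (h16 : cond16 W ρ (fun h g => σb h g) (fun h g => σc h g)) :
    ∀ (h g : H) (n : ℕ) (x y : Fin n → H) (m : ℕ) (u v : Fin m → H),
      W.Δ h = ∑ i, x i ⊗ₜ[k] y i → W.Δ g = ∑ j, u j ⊗ₜ[k] v j →
        ∑ i, ∑ j, σc (x i) (u j) * ρ (y i) (ρ (v j) 1) = σc h g := by
  let := W.toCoalgebra hW
  let σ : WithConv (H ⊗[k] H →ₗ[k] A) := toConv (TensorProduct.lift σb)
  let σbar : WithConv (H ⊗[k] H →ₗ[k] A) := toConv (TensorProduct.lift σc)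
  let ρ₂ : WithConv (H ⊗[k] H →ₗ[k] A) := toConv (TensorProduct.lift (ρ.compl₂ (ρ.flip 1)))
  let μ : WithConv (H ⊗[k] H →ₗ[k] A) := toConv (ρ.flip 1 ∘ₗ LinearMap.mul' k H)
  have h16l : σ * σbar = ρ₂ := LinearMap.convMul_eq_of_sum_tmul fun h g _ _ _ _ _ _ hx hu => by
    simpa [σ, σbar, ρ₂] using (h16 h g _ _ _ _ _ _ hx hu).1
  have h16r : σbar * σ = μ := LinearMap.convMul_eq_of_sum_tmul fun h g _ _ _ _ _ _ hx hu => by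
    simpa [σ, σbar, μ] using (h16 h g _ _ _ _ _ _ hx hu).2
  have h13' : μ * σbar = σbar := LinearMap.convMul_eq_of_sum_tmul fun h g _ _ _ _ _ _ hx hu => by
    simpa [σbar, μ] using (h13 h g _ _ _ _ _ _ hx hu).symm
  have hσbar : σbar * ρ₂ = σbar := by rw [← h16l, ← mul_assoc, h16r, h13']
  intro h g n x y m u v hx hu
  have := LinearMap.convMul_apply_tmul σbar ρ₂ hx hu
  rw [hσbar] at this
  simpa [σbar, ρ₂] using this.symm

/-- under conditions (1)–(4), (13) and (16), one has
`σ̄(h⁽¹⁾,k⁽¹⁾)(h⁽²⁾·(k⁽²⁾·1_A)) = σ̄(h,k)`. -/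
theorem statement3 {k H A : Type*} [Field k] [Ring H] [Algebra k H] [Ring A] [Algebra k A]
    (W : WeakHopfData k H) (hW : IsWeakHopf W) (ρ : H →ₗ[k] A →ₗ[k] A)
    (h1 : cond1 W ρ) (h2 : cond2 W ρ) (h3 : cond3 W ρ) (h4 : cond4 ρ)
    (σb : H →ₗ[k] H →ₗ[k] A) (hbal : HRBalanced W (fun h g => σb h g))
    (σc : H →ₗ[k] H →ₗ[k] A) (hbalc : HLBalanced W (fun h g => σc h g))
    (h13 : cond13 W ρ (fun h g => σc h g))
    (h16 : cond16 W ρ (fun h g => σb h g) (fun h g => σc h g)) :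
    ∀ (h g : H) (n : ℕ) (x y : Fin n → H) (m : ℕ) (u v : Fin m → H),
      W.Δ h = ∑ i, x i ⊗ₜ[k] y i → W.Δ g = ∑ j, u j ⊗ₜ[k] v j →
        ∑ i, ∑ j, σc (x i) (u j) * ρ (y i) (ρ (v j) 1) = σc h g :=
  statement3_general W hW ρ σb σc h13 h16
end

section
/- Assume ρ is a unital measuring (conditions (1)–(4)) and σ:H×H→A is a k-bilinear H^R-balanced map. If σ̄ and σ̃ are two k-bilinear H^L-balanced maps H×H→A, each satisfying conditions (13)–(16) (i.e. each is an inverse of σ), then σ̄ = σ̃. In other words, the inverse of σ, if it exists, is unique. -/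
open scoped TensorProduct

/-!
Linear maps `H ⊗ H → A` form a semigroup under convolution, associativity being coassociativity
of `Δ`. In it, (13) says that `e : h ⊗ g ↦ hg·1_A` is a left unit for `σ̄`, and (16) says that
`σ̄ ⋆ σ = e` and `σ ⋆ σ̄ = (h ⊗ g ↦ h·(g·1_A))`. Hence for two inverses `σ̄, σ̃`,
`σ̄ = e ⋆ σ̄ = σ̃ ⋆ (σ ⋆ σ̄) = σ̃ ⋆ (σ ⋆ σ̃) = e ⋆ σ̃ = σ̃`.
-/

open TensorProduct WithConv

abbrev IsWeakHopf.toCoalgebra {k H : Type*} [Field k] [Ring H] [Algebra k H]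
    {W : WeakHopfData k H} (hW : IsWeakHopf W) : Coalgebra k H where
  comul := W.Δ
  counit := W.ε
  coassoc := LinearMap.ext hW.coassoc
  rTensor_counit_comp_comul := LinearMap.ext fun h =>
    (TensorProduct.lid k H).injective (by simpa using hW.counit_left h)
  lTensor_counit_comp_comul := LinearMap.ext fun h =>
    (TensorProduct.rid k H).injective (by simpa using hW.counit_right h)

theorem mul_left_cancel_of_mul_eq_of_mul_eq {M : Type*} [Semigroup M] {b c d e : M}
    (hdb : d * b = e) (hc : e * c = c) (hd : e * d = d) (hbcd : b * c = b * d) : c = d :=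
  calc c = e * c := hc.symm
    _ = d * (b * c) := by rw [← hdb, mul_assoc]
    _ = d * (b * d) := by rw [hbcd]
    _ = d := by rw [← mul_assoc, hdb, hd]

section Convolution

variable {R C A : Type*} [CommSemiring R] [AddCommMonoid C] [Module R C] [CoalgebraStruct R C]
  [NonUnitalNonAssocSemiring A] [Module R A] [SMulCommClass R A A] [IsScalarTower R A A]

theorem convMul_tmul_eq_sum (F G : WithConv (C ⊗[R] C →ₗ[R] A)) {c d : C} {n m : ℕ}
    {x y : Fin n → C} {u v : Fin m → C} (hc : Coalgebra.comul c = ∑ i, x i ⊗ₜ[R] y i)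
    (hd : Coalgebra.comul d = ∑ j, u j ⊗ₜ[R] v j) :
    (F * G) (c ⊗ₜ d) = ∑ i, ∑ j, F (x i ⊗ₜ u j) * G (y i ⊗ₜ v j) := by
  simp only [LinearMap.convMul_apply, comul_tmul, hc, hd, sum_tmul, tmul_sum, map_sum,
    AlgebraTensorModule.tensorTensorTensorComm_tmul, map_tmul, LinearMap.mul'_apply]
  exact Finset.sum_comm

theorem toConv_mul_toConv_eq_of_sum {F G T : C ⊗[R] C →ₗ[R] A}
    (hFG : ∀ (c d : C) (n : ℕ) (x y : Fin n → C) (m : ℕ) (u v : Fin m → C),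
      Coalgebra.comul c = ∑ i, x i ⊗ₜ[R] y i → Coalgebra.comul d = ∑ j, u j ⊗ₜ[R] v j →
        ∑ i, ∑ j, F (x i ⊗ₜ u j) * G (y i ⊗ₜ v j) = T (c ⊗ₜ d)) :
    toConv F * toConv G = toConv T := by
  refine WithConv.ext (TensorProduct.ext' fun c d => ?_)
  obtain ⟨n, x, y, hc⟩ := exists_sum_tmul_eq (Coalgebra.comul (R := R) c)
  obtain ⟨m, u, v, hd⟩ := exists_sum_tmul_eq (Coalgebra.comul (R := R) d)
  exact (convMul_tmul_eq_sum _ _ hc hd).trans (hFG c d n x y m u v hc hd)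

end Convolution

theorem statement4_general {k H A : Type*} [Field k] [Ring H] [Algebra k H] [Ring A] [Algebra k A]
    (W : WeakHopfData k H) (hW : IsWeakHopf W) (ρ : H →ₗ[k] A →ₗ[k] A)
    (σb : H →ₗ[k] H →ₗ[k] A)
    (σc : H →ₗ[k] H →ₗ[k] A)
    (hc13 : cond13 W ρ (fun h g => σc h g))
    (hc16 : cond16 W ρ (fun h g => σb h g) (fun h g => σc h g))
    (σd : H →ₗ[k] H →ₗ[k] A)
    (hd13 : cond13 W ρ (fun h g => σd h g))
    (hd16 : cond16 W ρ (fun h g => σb h g) (fun h g => σd h g)) :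
    σc = σd := by
  let _ : Coalgebra k H := hW.toCoalgebra
  set unit : WithConv (H ⊗[k] H →ₗ[k] A) := toConv (ρ.flip 1 ∘ₗ LinearMap.mul' k H)
  set act : WithConv (H ⊗[k] H →ₗ[k] A) := toConv (lift (ρ.compl₂ (ρ.flip 1)))
  have unit_mul_c : unit * toConv (lift σc) = toConv (lift σc) :=
    toConv_mul_toConv_eq_of_sum fun h g n x y m u v hh hg => by
      simpa using (hc13 h g n x y m u v hh hg).symm
  have unit_mul_d : unit * toConv (lift σd) = toConv (lift σd) :=
    toConv_mul_toConv_eq_of_sum fun h g n x y m u v hh hg => by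
      simpa using (hd13 h g n x y m u v hh hg).symm
  have d_mul_b : toConv (lift σd) * toConv (lift σb) = unit :=
    toConv_mul_toConv_eq_of_sum fun h g n x y m u v hh hg => by
      simpa using (hd16 h g n x y m u v hh hg).2
  have b_mul_c : toConv (lift σb) * toConv (lift σc) = act :=
    toConv_mul_toConv_eq_of_sum fun h g n x y m u v hh hg => by
      simpa using (hc16 h g n x y m u v hh hg).1
  have b_mul_d : toConv (lift σb) * toConv (lift σd) = act :=
    toConv_mul_toConv_eq_of_sum fun h g n x y m u v hh hg => by
      simpa using (hd16 h g n x y m u v hh hg).1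
  have hcd : toConv (lift σc) = toConv (lift σd) :=
    mul_left_cancel_of_mul_eq_of_mul_eq d_mul_b unit_mul_c unit_mul_d (b_mul_c.trans b_mul_d.symm)
  exact (lift.equiv _ _ _ _).injective (toConv_injective hcd)

/-- the inverse of `σ` (conditions (13)–(16)) is unique. -/
theorem statement4 {k H A : Type*} [Field k] [Ring H] [Algebra k H] [Ring A] [Algebra k A]
    (W : WeakHopfData k H) (hW : IsWeakHopf W) (ρ : H →ₗ[k] A →ₗ[k] A)
    (h1 : cond1 W ρ) (h2 : cond2 W ρ) (h3 : cond3 W ρ) (h4 : cond4 ρ)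
    (σb : H →ₗ[k] H →ₗ[k] A) (hbal : HRBalanced W (fun h g => σb h g))
    (σc : H →ₗ[k] H →ₗ[k] A) (hbalc : HLBalanced W (fun h g => σc h g))
    (hc13 : cond13 W ρ (fun h g => σc h g)) (hc14 : cond14 W ρ (fun h g => σc h g))
    (hc15 : cond15 W ρ (fun h g => σc h g))
    (hc16 : cond16 W ρ (fun h g => σb h g) (fun h g => σc h g))
    (σd : H →ₗ[k] H →ₗ[k] A) (hbald : HLBalanced W (fun h g => σd h g))
    (hd13 : cond13 W ρ (fun h g => σd h g)) (hd14 : cond14 W ρ (fun h g => σd h g))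
    (hd15 : cond15 W ρ (fun h g => σd h g))
    (hd16 : cond16 W ρ (fun h g => σb h g) (fun h g => σd h g)) :
    σc = σd :=
  statement4_general W hW ρ σb σc hc13 hc16 σd hd13 hd16
end

section
/- Assume ρ is a unital measuring (conditions (1)–(4)) and σ:H×H→A is a k-bilinear H^R-balanced map. If a k-bilinear H^L-balanced map σ̄:H×H→A satisfies conditions (14), (15) and (16), then the map σ̃:H×H→A defined by σ̃(h,k) := (h⁽¹⁾k⁽¹⁾·1_A)σ̄(h⁽²⁾,k⁽²⁾) satisfies all four conditions (13)–(16). -/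
open scoped TensorProduct

/-!
The twisted map `σ̃` is in fact equal to `σ̄`, after which (13) is the defining formula of `σ̃` and
(14)–(16) are hypotheses. To see `σ̃ = σ̄`, expand `h₍₁₎k₍₁₎·1_A` by the second half of (16),
contract the resulting `σ σ̄` by its first half, and absorb the leftover `h₍₂₎·(k₍₂₎·1_A)` into the
second argument of `σ̄` by (1) and (15). What is left is `σ̄(h, S⁻¹(Π^L(k₍₂₎)) k₍₁₎) = σ̄(h, k)`, an
identity of weak Hopf algebras coming from `S(k₍₁₎) Π^L(k₍₂₎) = S(k)` and the anti-multiplicativity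
of `S`.
-/

open TensorProduct LinearMap

theorem exists_sum_tmul_eq_comp {k X M N ι : Type*} [CommSemiring k] [AddCommMonoid M] [Module k M]
    [AddCommMonoid N] [Module k N] (g : X → M ⊗[k] N) (z : ι → X) :
    ∃ (m : ι → ℕ) (c : ∀ i, Fin (m i) → M) (d : ∀ i, Fin (m i) → N),
      ∀ i, g (z i) = ∑ r, c i r ⊗ₜ[k] d i r := by
  choose m c d h using fun i => exists_sum_tmul_eq (g (z i))
  exact ⟨m, c, d, h⟩

theorem sum_sum_sum_sum_comm {M ι κ : Type*} [AddCommMonoid M] [Fintype ι] [Fintype κ]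
    {m : ι → ℕ} {m' : κ → ℕ} (f : ∀ i, Fin (m i) → ∀ j, Fin (m' j) → M) :
    ∑ i, ∑ r, ∑ j, ∑ s, f i r j s = ∑ j, ∑ s, ∑ i, ∑ r, f i r j s := by
  simpa only [Fintype.sum_sigma] using
    Finset.sum_comm (s := (Finset.univ : Finset (Σ i, Fin (m i))))
      (t := (Finset.univ : Finset (Σ j, Fin (m' j)))) (f := fun p q => f p.1 p.2 q.1 q.2)

theorem piL_eq_sum {k H ι : Type*} [Field k] [Ring H] [Algebra k H] {W : WeakHopfData k H}
    [Fintype ι] {p q : ι → H} (h1 : W.Δ 1 = ∑ t, p t ⊗ₜ[k] q t) (h : H) :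
    piL W h = ∑ t, W.ε (p t * h) • q t := by
  simp only [piL, h1, map_sum, rTensor_tmul, lid_tmul, coe_comp, Function.comp_apply,
    mulRight_apply]

theorem piR_eq_sum {k H ι : Type*} [Field k] [Ring H] [Algebra k H] {W : WeakHopfData k H}
    [Fintype ι] {p q : ι → H} (h1 : W.Δ 1 = ∑ t, p t ⊗ₜ[k] q t) (h : H) :
    piR W h = ∑ t, W.ε (h * q t) • p t := by
  simp only [piR, h1, map_sum, lTensor_tmul, rid_tmul, coe_comp, Function.comp_apply,
    mulLeft_apply]

namespace IsWeakHopf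

variable {k H : Type*} [Field k] [Ring H] [Algebra k H] {W : WeakHopfData k H}

theorem sum_mul_S (hW : IsWeakHopf W) {ι : Type*} [Fintype ι] {h : H} {x y : ι → H}
    (hh : W.Δ h = ∑ i, x i ⊗ₜ[k] y i) : ∑ i, x i * W.S (y i) = piL W h := by
  rw [← (Fintype.equivFin ι).symm.sum_comp] at hh ⊢
  exact hW.antipode_left h _ _ _ hh

theorem sum_S_mul (hW : IsWeakHopf W) {ι : Type*} [Fintype ι] {h : H} {x y : ι → H}
    (hh : W.Δ h = ∑ i, x i ⊗ₜ[k] y i) : ∑ i, W.S (x i) * y i = piR W h := by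
  rw [← (Fintype.equivFin ι).symm.sum_comp] at hh ⊢
  exact hW.antipode_right h _ _ _ hh

theorem sum_sum_S_mul_mul_S (hW : IsWeakHopf W) {ι : Type*} [Fintype ι] {h : H}
    {x y : ι → H} (hh : W.Δ h = ∑ i, x i ⊗ₜ[k] y i) {m : ι → ℕ} {c d : ∀ i, Fin (m i) → H}
    (hy : ∀ i, W.Δ (y i) = ∑ r, c i r ⊗ₜ[k] d i r) :
    ∑ i, ∑ r, W.S (x i) * c i r * W.S (d i r) = W.S h := by
  let e := (Fintype.equivFin ι).symm
  rw [← e.sum_comp] at hh ⊢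
  exact hW.antipode_mid h _ _ _ hh _ _ _ fun i => hy (e i)

theorem comul_mul_eq_sum (hW : IsWeakHopf W) {ι κ : Type*} [Fintype ι] [Fintype κ]
    {h l : H} {x y : ι → H} {u v : κ → H} (hh : W.Δ h = ∑ i, x i ⊗ₜ[k] y i)
    (hl : W.Δ l = ∑ j, u j ⊗ₜ[k] v j) :
    W.Δ (h * l) = ∑ p : ι × κ, (x p.1 * u p.2) ⊗ₜ[k] (y p.1 * v p.2) := by
  rw [hW.comul_mul, hh, hl, Finset.sum_mul_sum, Fintype.sum_prod_type]
  simp only [Algebra.TensorProduct.tmul_mul_tmul]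

theorem coassoc_sum {B : Type*} [Ring B] [Algebra k B] (hW : IsWeakHopf W)
    (F G K : H →ₗ[k] B) {ι : Type*} [Fintype ι] {h : H} {x y : ι → H}
    (hh : W.Δ h = ∑ i, x i ⊗ₜ[k] y i) {m : ι → ℕ} {a b : ∀ i, Fin (m i) → H}
    (hx : ∀ i, W.Δ (x i) = ∑ r, a i r ⊗ₜ[k] b i r) {m' : ι → ℕ} {c d : ∀ i, Fin (m' i) → H}
    (hy : ∀ i, W.Δ (y i) = ∑ r, c i r ⊗ₜ[k] d i r) :
    ∑ i, ∑ r, F (a i r) * G (b i r) * K (y i) = ∑ i, ∑ r, F (x i) * G (c i r) * K (d i r) := by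
  let Ψ : H ⊗[k] (H ⊗[k] H) →ₗ[k] B :=
    LinearMap.mul' k B ∘ₗ map F (LinearMap.mul' k B ∘ₗ map G K)
  simpa only [hh, hx, hy, map_sum, rTensor_tmul, lTensor_tmul, sum_tmul, tmul_sum, assoc_tmul,
    Ψ, coe_comp, Function.comp_apply, map_tmul, mul'_apply, ← mul_assoc] using
    congrArg Ψ (hW.coassoc h)

theorem coassoc_sum₂ {B : Type*} [Ring B] [Algebra k B] (hW : IsWeakHopf W)
    (F G K : H →ₗ[k] H →ₗ[k] B) {ι κ : Type*} [Fintype ι] [Fintype κ]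
    {h l : H} {x y : ι → H} {u v : κ → H}
    (hh : W.Δ h = ∑ i, x i ⊗ₜ[k] y i) (hl : W.Δ l = ∑ j, u j ⊗ₜ[k] v j)
    {m₁ : ι → ℕ} {a b : ∀ i, Fin (m₁ i) → H} (hx : ∀ i, W.Δ (x i) = ∑ r, a i r ⊗ₜ[k] b i r)
    {m₂ : ι → ℕ} {c d : ∀ i, Fin (m₂ i) → H} (hy : ∀ i, W.Δ (y i) = ∑ r, c i r ⊗ₜ[k] d i r)
    {m₃ : κ → ℕ} {a' b' : ∀ j, Fin (m₃ j) → H} (hu : ∀ j, W.Δ (u j) = ∑ s, a' j s ⊗ₜ[k] b' j s)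
    {m₄ : κ → ℕ} {e f : ∀ j, Fin (m₄ j) → H} (hv : ∀ j, W.Δ (v j) = ∑ s, e j s ⊗ₜ[k] f j s) :
    ∑ i, ∑ j, ∑ r, ∑ s, F (a i r) (a' j s) * G (b i r) (b' j s) * K (y i) (v j) =
      ∑ i, ∑ j, ∑ r, ∑ s, F (x i) (u j) * G (c i r) (e j s) * K (d i r) (f j s) := by
  calc _ = ∑ j, ∑ s, ∑ i, ∑ r, F (a i r) (a' j s) * G (b i r) (b' j s) * K (y i) (v j) := by
          rw [← sum_sum_sum_sum_comm]
          exact Finset.sum_congr rfl fun i _ => Finset.sum_comm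
    _ = ∑ j, ∑ s, ∑ i, ∑ r, F (x i) (a' j s) * G (c i r) (b' j s) * K (d i r) (v j) :=
          Finset.sum_congr rfl fun j _ => Finset.sum_congr rfl fun s _ =>
            hW.coassoc_sum (F.flip (a' j s)) (G.flip (b' j s)) (K.flip (v j)) hh hx hy
    _ = ∑ i, ∑ r, ∑ j, ∑ s, F (x i) (u j) * G (c i r) (e j s) * K (d i r) (f j s) := by
          rw [← sum_sum_sum_sum_comm]
          exact Finset.sum_congr rfl fun i _ => Finset.sum_congr rfl fun r _ =>
            hW.coassoc_sum (F (x i)) (G (c i r)) (K (d i r)) hl hu hv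
    _ = _ := Finset.sum_congr rfl fun i _ => Finset.sum_comm

theorem counit_mul_piL (hW : IsWeakHopf W) (h l : H) : W.ε (h * piL W l) = W.ε (h * l) := by
  obtain ⟨n, p, q, h1⟩ := exists_sum_tmul_eq (W.Δ 1)
  have := (hW.weak_counit h 1 l n p q h1).2
  rw [mul_one] at this
  simp only [piL_eq_sum h1, Finset.mul_sum, mul_smul_comm, map_sum, map_smul, smul_eq_mul,
    this, mul_comm]

theorem counit_piR_mul (hW : IsWeakHopf W) (h l : H) : W.ε (piR W h * l) = W.ε (h * l) := by
  obtain ⟨n, p, q, h1⟩ := exists_sum_tmul_eq (W.Δ 1)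
  have := (hW.weak_counit h 1 l n p q h1).2
  rw [mul_one] at this
  simp only [piR_eq_sum h1, Finset.sum_mul, smul_mul_assoc, map_sum, map_smul, smul_eq_mul,
    this]

theorem piL_mul_piL (hW : IsWeakHopf W) (h l : H) : piL W (h * piL W l) = piL W (h * l) := by
  obtain ⟨n, p, q, h1⟩ := exists_sum_tmul_eq (W.Δ 1)
  rw [piL_eq_sum h1 (h * piL W l), piL_eq_sum h1 (h * l)]
  simp only [← mul_assoc, hW.counit_mul_piL]

theorem piR_piR_mul (hW : IsWeakHopf W) (h l : H) : piR W (piR W h * l) = piR W (h * l) := by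
  obtain ⟨n, p, q, h1⟩ := exists_sum_tmul_eq (W.Δ 1)
  rw [piR_eq_sum h1 (piR W h * l), piR_eq_sum h1 (h * l)]
  simp only [mul_assoc, hW.counit_piR_mul]

theorem comul_mul_comul_one (hW : IsWeakHopf W) (h : H) : W.Δ h * W.Δ 1 = W.Δ h := by
  rw [← hW.comul_mul, mul_one]

theorem comul_one_mul_comul (hW : IsWeakHopf W) (h : H) : W.Δ 1 * W.Δ h = W.Δ h := by
  rw [← hW.comul_mul, one_mul]

theorem lTensor_comul_comul_one_eq_sum (hW : IsWeakHopf W) {ι : Type*} [Fintype ι]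
    {p q : ι → H} (h1 : W.Δ 1 = ∑ t, p t ⊗ₜ[k] q t) :
    lTensor H W.Δ (W.Δ 1) = ∑ t, ∑ s, p t ⊗ₜ[k] ((q t * p s) ⊗ₜ[k] q s) := by
  rw [hW.weak_comul_one₁, h1, sum_tmul, tmul_sum, map_sum, Finset.sum_mul_sum]
  simp only [assoc_tmul, Algebra.TensorProduct.tmul_mul_tmul, one_mul, mul_one]

theorem lTensor_comul_comul_one_eq_sum' (hW : IsWeakHopf W) {ι : Type*} [Fintype ι]
    {p q : ι → H} (h1 : W.Δ 1 = ∑ t, p t ⊗ₜ[k] q t) :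
    lTensor H W.Δ (W.Δ 1) = ∑ t, ∑ s, p s ⊗ₜ[k] ((p t * q s) ⊗ₜ[k] q t) := by
  rw [hW.weak_comul_one₂, h1, sum_tmul, tmul_sum, map_sum, Finset.sum_mul_sum]
  simp only [assoc_tmul, Algebra.TensorProduct.tmul_mul_tmul, one_mul, mul_one]

theorem comul_piL (hW : IsWeakHopf W) (l : H) :
    W.Δ (piL W l) = W.Δ 1 * (piL W l ⊗ₜ[k] 1) := by
  obtain ⟨n, p, q, h1⟩ := exists_sum_tmul_eq (W.Δ 1)
  let contract : H ⊗[k] (H ⊗[k] H) →ₗ[k] H ⊗[k] H :=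
    (TensorProduct.lid k (H ⊗[k] H)).toLinearMap ∘ₗ rTensor _ (W.ε ∘ₗ mulRight k l)
  have e₁ : contract (lTensor H W.Δ (W.Δ 1)) = W.Δ (piL W l) := by
    simp only [contract, h1, piL_eq_sum h1, map_sum, map_smul, lTensor_tmul, rTensor_tmul,
      coe_comp, Function.comp_apply, LinearEquiv.coe_coe, lid_tmul, mulRight_apply]
  have e₂ := congrArg contract (hW.lTensor_comul_comul_one_eq_sum' h1)
  rw [e₁] at e₂
  rw [e₂, h1, piL_eq_sum h1, Finset.sum_mul]
  simp only [contract, map_sum, rTensor_tmul, coe_comp, Function.comp_apply, LinearEquiv.coe_coe,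
    lid_tmul, mulRight_apply, Algebra.TensorProduct.tmul_mul_tmul, mul_one, Finset.mul_sum,
    sum_tmul, mul_smul_comm, smul_tmul']

theorem comul_piR (hW : IsWeakHopf W) (h : H) :
    W.Δ (piR W h) = (1 ⊗ₜ[k] piR W h) * W.Δ 1 := by
  obtain ⟨n, p, q, h1⟩ := exists_sum_tmul_eq (W.Δ 1)
  let contract : (H ⊗[k] H) ⊗[k] H →ₗ[k] H ⊗[k] H :=
    (TensorProduct.rid k (H ⊗[k] H)).toLinearMap ∘ₗ lTensor _ (W.ε ∘ₗ mulLeft k h)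
  have e₁ : contract (rTensor H W.Δ (W.Δ 1)) = W.Δ (piR W h) := by
    simp only [contract, h1, piR_eq_sum h1, map_sum, map_smul, lTensor_tmul, rTensor_tmul,
      coe_comp, Function.comp_apply, LinearEquiv.coe_coe, rid_tmul, mulLeft_apply]
  have e₂ := congrArg contract (congrArg (TensorProduct.assoc k H H H).symm
    ((hW.coassoc 1).trans (hW.lTensor_comul_comul_one_eq_sum' h1)))
  rw [LinearEquiv.symm_apply_apply, e₁] at e₂
  rw [e₂, h1, piR_eq_sum h1, Finset.mul_sum, Finset.sum_comm]
  simp only [contract, map_sum, lTensor_tmul, coe_comp, Function.comp_apply, LinearEquiv.coe_coe,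
    rid_tmul, mulLeft_apply, assoc_symm_tmul, Algebra.TensorProduct.tmul_mul_tmul, one_mul,
    Finset.sum_mul, tmul_sum, smul_mul_assoc, tmul_smul]

theorem piL_mul_piR_comm (hW : IsWeakHopf W) (h l : H) :
    piL W h * piR W l = piR W l * piL W h := by
  -- both products are the same contraction of `Δ²(1)`, expanded by the two weak axioms for it
  obtain ⟨n, p, q, h1⟩ := exists_sum_tmul_eq (W.Δ 1)
  let contract : H ⊗[k] (H ⊗[k] H) →ₗ[k] H :=
    (TensorProduct.lid k H).toLinearMap ∘ₗ
      map (W.ε ∘ₗ mulRight k h) ((TensorProduct.rid k H).toLinearMap ∘ₗ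
        lTensor H (W.ε ∘ₗ mulLeft k l))
  have := congrArg contract ((hW.lTensor_comul_comul_one_eq_sum h1).symm.trans
    (hW.lTensor_comul_comul_one_eq_sum' h1))
  simp only [contract, map_sum, map_tmul, lTensor_tmul, coe_comp, Function.comp_apply,
    LinearEquiv.coe_coe, rid_tmul, lid_tmul, mulRight_apply, mulLeft_apply, smul_smul] at this
  simp only [piL_eq_sum h1, piR_eq_sum h1, Finset.sum_mul_sum, smul_mul_smul_comm, this]
  exact Finset.sum_congr rfl fun t _ => Finset.sum_congr rfl fun s _ => by rw [mul_comm]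

theorem sum_mul_piL_mul_S (hW : IsWeakHopf W) {ι : Type*} [Fintype ι] {h : H} {x y : ι → H}
    (hh : W.Δ h = ∑ i, x i ⊗ₜ[k] y i) (l : H) :
    ∑ i, x i * piL W l * W.S (y i) = piL W (h * l) := by
  have hd : W.Δ (h * piL W l) = ∑ i, (x i * piL W l) ⊗ₜ[k] y i := by
    rw [hW.comul_mul, hW.comul_piL, ← mul_assoc, hW.comul_mul_comul_one, hh, Finset.sum_mul]
    simp only [Algebra.TensorProduct.tmul_mul_tmul, mul_one]
  rw [hW.sum_mul_S hd, hW.piL_mul_piL]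

theorem sum_S_mul_piR_mul (hW : IsWeakHopf W) {ι : Type*} [Fintype ι] {l : H} {u v : ι → H}
    (hl : W.Δ l = ∑ j, u j ⊗ₜ[k] v j) (h : H) :
    ∑ j, W.S (u j) * (piR W h * v j) = piR W (h * l) := by
  have hd : W.Δ (piR W h * l) = ∑ j, u j ⊗ₜ[k] (piR W h * v j) := by
    rw [hW.comul_mul, hW.comul_piR, mul_assoc, hW.comul_one_mul_comul, hl, Finset.mul_sum]
    simp only [Algebra.TensorProduct.tmul_mul_tmul, one_mul]
  rw [hW.sum_S_mul hd, hW.piR_piR_mul]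

theorem sum_S_mul_piL (hW : IsWeakHopf W) {ι : Type*} [Fintype ι] {h : H} {x y : ι → H}
    (hh : W.Δ h = ∑ i, x i ⊗ₜ[k] y i) : ∑ i, W.S (x i) * piL W (y i) = W.S h := by
  obtain ⟨m, c, d, hy⟩ := exists_sum_tmul_eq_comp W.Δ y
  rw [← hW.sum_sum_S_mul_mul_S hh hy]
  refine Finset.sum_congr rfl fun i _ => ?_
  simp only [← hW.sum_mul_S (hy i), Finset.mul_sum, mul_assoc]

theorem sum_piR_mul_S (hW : IsWeakHopf W) {ι : Type*} [Fintype ι] {h : H} {x y : ι → H}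
    (hh : W.Δ h = ∑ i, x i ⊗ₜ[k] y i) : ∑ i, piR W (x i) * W.S (y i) = W.S h := by
  obtain ⟨m, a, b, hx⟩ := exists_sum_tmul_eq_comp W.Δ x
  obtain ⟨m', c, d, hy⟩ := exists_sum_tmul_eq_comp W.Δ y
  have := hW.coassoc_sum W.S LinearMap.id W.S hh hx hy
  simp only [LinearMap.id_apply] at this
  rw [← hW.sum_sum_S_mul_mul_S hh hy, ← this]
  simp only [← hW.sum_S_mul (hx _), Finset.sum_mul]

/-- `S(hl)` and `S(l)S(h)` both equal `S(h₍₁₎l₍₁₎) h₍₂₎l₍₂₎ S(l₍₃₎) S(h₍₃₎)`. -/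
theorem S_mul_eq_sum (hW : IsWeakHopf W) {ι κ : Type*} [Fintype ι] [Fintype κ]
    {h l : H} {x y : ι → H} {u v : κ → H}
    (hh : W.Δ h = ∑ i, x i ⊗ₜ[k] y i) (hl : W.Δ l = ∑ j, u j ⊗ₜ[k] v j)
    {m₁ : ι → ℕ} {a b : ∀ i, Fin (m₁ i) → H} (hx : ∀ i, W.Δ (x i) = ∑ r, a i r ⊗ₜ[k] b i r)
    {m₂ : ι → ℕ} {c d : ∀ i, Fin (m₂ i) → H} (hy : ∀ i, W.Δ (y i) = ∑ r, c i r ⊗ₜ[k] d i r)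
    {m₃ : κ → ℕ} {a' b' : ∀ j, Fin (m₃ j) → H} (hu : ∀ j, W.Δ (u j) = ∑ s, a' j s ⊗ₜ[k] b' j s)
    {m₄ : κ → ℕ} {e f : ∀ j, Fin (m₄ j) → H} (hv : ∀ j, W.Δ (v j) = ∑ s, e j s ⊗ₜ[k] f j s) :
    W.S (h * l) = ∑ i, ∑ j, ∑ r, ∑ s,
      W.S (a i r * a' j s) * (b i r * b' j s) * (W.S (v j) * W.S (y i)) := by
  have := hW.coassoc_sum₂ ((LinearMap.mul k H).compr₂ W.S) (LinearMap.mul k H)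
    ((LinearMap.mul k H).flip.compl₁₂ W.S W.S) hh hl hx hy hu hv
  simp only [compr₂_apply, compl₁₂_apply, mul_apply', flip_apply] at this
  rw [this, ← hW.sum_S_mul_piL (hW.comul_mul_eq_sum hh hl), Fintype.sum_prod_type]
  refine Finset.sum_congr rfl fun i _ => Finset.sum_congr rfl fun j _ => ?_
  rw [← hW.sum_mul_piL_mul_S (hy i), Finset.mul_sum]
  refine Finset.sum_congr rfl fun r _ => ?_
  simp only [← hW.sum_mul_S (hv j), Finset.mul_sum, Finset.sum_mul, mul_assoc]

theorem sum_eq_S_mul_S (hW : IsWeakHopf W) {ι κ : Type*} [Fintype ι] [Fintype κ]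
    {h l : H} {x y : ι → H} {u v : κ → H}
    (hh : W.Δ h = ∑ i, x i ⊗ₜ[k] y i) (hl : W.Δ l = ∑ j, u j ⊗ₜ[k] v j)
    {m₁ : ι → ℕ} {a b : ∀ i, Fin (m₁ i) → H} (hx : ∀ i, W.Δ (x i) = ∑ r, a i r ⊗ₜ[k] b i r)
    {m₃ : κ → ℕ} {a' b' : ∀ j, Fin (m₃ j) → H} (hu : ∀ j, W.Δ (u j) = ∑ s, a' j s ⊗ₜ[k] b' j s)
    {m₄ : κ → ℕ} {e f : ∀ j, Fin (m₄ j) → H} (hv : ∀ j, W.Δ (v j) = ∑ s, e j s ⊗ₜ[k] f j s) :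
    ∑ i, ∑ j, ∑ r, ∑ s, W.S (a i r * a' j s) * (b i r * b' j s) * (W.S (v j) * W.S (y i)) =
      W.S l * W.S h := by
  calc _ = ∑ i, ∑ j, ∑ s, W.S (a' j s) * (piR W (x i) * b' j s) * (W.S (v j) * W.S (y i)) := by
        refine Finset.sum_congr rfl fun i _ => Finset.sum_congr rfl fun j _ => ?_
        have hxu := hW.sum_S_mul (hW.comul_mul_eq_sum (hx i) (hu j))
        rw [Fintype.sum_prod_type, ← hW.sum_S_mul_piR_mul (hu j)] at hxu
        simp only [← Finset.sum_mul, hxu]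
    _ = ∑ i, ∑ j, ∑ s, W.S (u j) * (piR W (x i) * e j s) * (W.S (f j s) * W.S (y i)) :=
        Finset.sum_congr rfl fun i _ => by
          simpa only [coe_comp, Function.comp_apply, mulLeft_apply, mulRight_apply] using
            hW.coassoc_sum W.S (mulLeft k (piR W (x i))) (mulRight k (W.S (y i)) ∘ₗ W.S) hl hu hv
    _ = ∑ i, ∑ j, W.S (u j) * piL W (v j) * (piR W (x i) * W.S (y i)) := by
        refine Finset.sum_congr rfl fun i _ => Finset.sum_congr rfl fun j _ => ?_
        rw [mul_assoc (W.S (u j)), ← mul_assoc (piL W (v j)), hW.piL_mul_piR_comm,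
          ← hW.sum_mul_S (hv j)]
        simp only [Finset.mul_sum, Finset.sum_mul, mul_assoc]
    _ = W.S l * W.S h := by
        rw [← hW.sum_S_mul_piL hl, ← hW.sum_piR_mul_S hh, Finset.sum_mul_sum, Finset.sum_comm]

theorem S_mul (hW : IsWeakHopf W) (h l : H) : W.S (h * l) = W.S l * W.S h := by
  obtain ⟨n, x, y, hh⟩ := exists_sum_tmul_eq (W.Δ h)
  obtain ⟨n', u, v, hl⟩ := exists_sum_tmul_eq (W.Δ l)
  obtain ⟨_, a, b, hx⟩ := exists_sum_tmul_eq_comp W.Δ x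
  obtain ⟨_, c, d, hy⟩ := exists_sum_tmul_eq_comp W.Δ y
  obtain ⟨_, a', b', hu⟩ := exists_sum_tmul_eq_comp W.Δ u
  obtain ⟨_, e, f, hv⟩ := exists_sum_tmul_eq_comp W.Δ v
  exact (hW.S_mul_eq_sum hh hl hx hy hu hv).trans (hW.sum_eq_S_mul_S hh hl hx hu hv)

theorem sum_Sinv_piL_mul (hW : IsWeakHopf W) {ι : Type*} [Fintype ι] {h : H} {x y : ι → H}
    (hh : W.Δ h = ∑ i, x i ⊗ₜ[k] y i) : ∑ i, W.Sinv (piL W (y i)) * x i = h := by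
  rw [← hW.Sinv_S (∑ i, _), map_sum, ← hW.Sinv_S h, ← hW.sum_S_mul_piL hh]
  simp only [hW.S_mul, hW.S_Sinv]

end IsWeakHopf

section Twist

variable {k H A : Type*} [Field k] [Ring H] [Algebra k H] [Ring A] [Algebra k A]
  {W : WeakHopfData k H} {ρ : H →ₗ[k] A →ₗ[k] A}

theorem sigmaTilde_eq_sum (σc : H →ₗ[k] H →ₗ[k] A) {ι κ : Type*} [Fintype ι] [Fintype κ]
    {h g : H} {x y : ι → H} {u v : κ → H} (hh : W.Δ h = ∑ i, x i ⊗ₜ[k] y i)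
    (hg : W.Δ g = ∑ j, u j ⊗ₜ[k] v j) :
    sigmaTilde W ρ σc h g = ∑ i, ∑ j, ρ (x i * u j) 1 * σc (y i) (v j) := by
  simp only [sigmaTilde, hh, hg, sum_tmul, tmul_sum, map_sum, tensorTensorTensorComm_tmul,
    map_tmul, lift.tmul, mul'_apply, coe_comp, Function.comp_apply, flip_apply]
  exact Finset.sum_comm

theorem sigmaTilde_eq (hW : IsWeakHopf W) (h1 : cond1 W ρ) {σb σc : H →ₗ[k] H →ₗ[k] A}
    (hc15 : cond15 W ρ (fun h g => σc h g))
    (hc16 : cond16 W ρ (fun h g => σb h g) (fun h g => σc h g)) (h g : H) :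
    sigmaTilde W ρ σc h g = σc h g := by
  obtain ⟨n, x, y, hh⟩ := exists_sum_tmul_eq (W.Δ h)
  obtain ⟨m, u, v, hg⟩ := exists_sum_tmul_eq (W.Δ g)
  obtain ⟨_, a, b, hx⟩ := exists_sum_tmul_eq_comp W.Δ x
  obtain ⟨_, c, d, hy⟩ := exists_sum_tmul_eq_comp W.Δ y
  obtain ⟨_, a', b', hu⟩ := exists_sum_tmul_eq_comp W.Δ u
  obtain ⟨_, e, f, hv⟩ := exists_sum_tmul_eq_comp W.Δ v
  calc sigmaTilde W ρ σc h g
      = ∑ i, ∑ j, ∑ r, ∑ s, σc (a i r) (a' j s) * σb (b i r) (b' j s) * σc (y i) (v j) := by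
        rw [sigmaTilde_eq_sum σc hh hg]
        refine Finset.sum_congr rfl fun i _ => Finset.sum_congr rfl fun j _ => ?_
        rw [← (hc16 _ _ _ _ _ _ _ _ (hx i) (hu j)).2]
        simp only [Finset.sum_mul]
    _ = ∑ i, ∑ j, ∑ r, ∑ s, σc (x i) (u j) * σb (c i r) (e j s) * σc (d i r) (f j s) :=
        hW.coassoc_sum₂ σc σb σc hh hg hx hy hu hv
    _ = ∑ i, ∑ j, σc (x i) (u j) * ρ (y i) (ρ (piL W (v j)) 1) := by
        refine Finset.sum_congr rfl fun i _ => Finset.sum_congr rfl fun j _ => ?_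
        rw [← h1, ← (hc16 _ _ _ _ _ _ _ _ (hy i) (hv j)).1]
        simp only [Finset.mul_sum, mul_assoc]
    _ = ∑ j, σc h (W.Sinv (piL W (v j)) * u j) := by
        rw [Finset.sum_comm]
        exact Finset.sum_congr rfl fun j _ => hc15 _ _ _ ⟨v j, rfl⟩ _ _ _ hh
    _ = σc h g := by rw [← map_sum, hW.sum_Sinv_piL_mul hg]

end Twist

theorem statement5_general {k H A : Type*} [Field k] [Ring H] [Algebra k H] [Ring A] [Algebra k A]
    (W : WeakHopfData k H) (hW : IsWeakHopf W) (ρ : H →ₗ[k] A →ₗ[k] A)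
    (h1 : cond1 W ρ) (σb : H →ₗ[k] H →ₗ[k] A) (σc : H →ₗ[k] H →ₗ[k] A)
    (hc14 : cond14 W ρ (fun h g => σc h g)) (hc15 : cond15 W ρ (fun h g => σc h g))
    (hc16 : cond16 W ρ (fun h g => σb h g) (fun h g => σc h g)) :
    cond13 W ρ (sigmaTilde W ρ σc) ∧ cond14 W ρ (sigmaTilde W ρ σc) ∧
      cond15 W ρ (sigmaTilde W ρ σc) ∧
      cond16 W ρ (fun h g => σb h g) (sigmaTilde W ρ σc) := by
  have hσ : sigmaTilde W ρ σc = fun h g => σc h g :=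
    funext₂ (sigmaTilde_eq hW h1 hc15 hc16)
  refine ⟨fun h g n x y m u v hh hg => ?_, hσ ▸ hc14, hσ ▸ hc15, hσ ▸ hc16⟩
  simp only [hσ]
  rw [← sigmaTilde_eq_sum σc hh hg, hσ]

/-- if `σ̄` satisfies (14)–(16), then
`σ̃(h,k) := (h⁽¹⁾k⁽¹⁾·1_A)σ̄(h⁽²⁾,k⁽²⁾)` satisfies (13)–(16). -/
theorem statement5 {k H A : Type*} [Field k] [Ring H] [Algebra k H] [Ring A] [Algebra k A]
    (W : WeakHopfData k H) (hW : IsWeakHopf W) (ρ : H →ₗ[k] A →ₗ[k] A)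
    (h1 : cond1 W ρ) (h2 : cond2 W ρ) (h3 : cond3 W ρ) (h4 : cond4 ρ)
    (σb : H →ₗ[k] H →ₗ[k] A) (hbal : HRBalanced W (fun h g => σb h g))
    (σc : H →ₗ[k] H →ₗ[k] A) (hbalc : HLBalanced W (fun h g => σc h g))
    (hc14 : cond14 W ρ (fun h g => σc h g)) (hc15 : cond15 W ρ (fun h g => σc h g))
    (hc16 : cond16 W ρ (fun h g => σb h g) (fun h g => σc h g)) :
    cond13 W ρ (sigmaTilde W ρ σc) ∧ cond14 W ρ (sigmaTilde W ρ σc) ∧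
      cond15 W ρ (sigmaTilde W ρ σc) ∧
      cond16 W ρ (fun h g => σb h g) (sigmaTilde W ρ σc) :=
  statement5_general W hW ρ h1 σb σc hc14 hc15 hc16
end
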